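/- arXiv:2503.03438 — 4 statements merged into one kernel-verified Lean document; each statement's English description precedes it below -/
import Mathlib

section
/- Let E be a real inner product space, T a natural number, and g : Fin T → E a family of task gradients. For each index i, let g'_i be the orthogonal projection of g_i onto the orthogonal complement of the submodule spanned by {g j : j ≠ i}. Then the modified gradients are strongly non-conflicting with the original gradients: for all indices i and j, ⟪g'_i, g j⟫ ≥ 0. -/
open scoped RealInnerProductSpace

/-- The GradOPS-modified gradient: the orthogonal projection of `g i` onto the orthogonal
complement of the submodule spanned by the other task gradients `{g j : j ≠ i}`. -/
noncomputable def gradOPSGrad {E : Type*} [NormedAddCommGroup E] [InnerProductSpace ℝ E]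
    {T : ℕ} (g : Fin T → E) (i : Fin T) : E :=
  haveI : FiniteDimensional ℝ (Submodule.span ℝ (g '' {j | j ≠ i})) :=
    FiniteDimensional.span_of_finite ℝ (Set.toFinite _)
  g i - (Submodule.orthogonalProjection (Submodule.span ℝ (g '' {j | j ≠ i})) (g i) : E)

theorem stmt1 {E : Type*} [NormedAddCommGroup E] [InnerProductSpace ℝ E]
    {T : ℕ} (g : Fin T → E) (i j : Fin T) :
    0 ≤ ⟪gradOPSGrad g i, g j⟫ := by
  haveI : FiniteDimensional ℝ (Submodule.span ℝ (g '' {j | j ≠ i})) :=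
    FiniteDimensional.span_of_finite ℝ (Set.toFinite _)
  have hmem : gradOPSGrad g i ∈ (Submodule.span ℝ (g '' {j | j ≠ i}))ᗮ :=
    Submodule.sub_starProjection_mem_orthogonal (g i)
  by_cases hji : j = i
  · subst hji
    set p : E := (Submodule.orthogonalProjection (Submodule.span ℝ (g '' {k | k ≠ j})) (g j) : E) with hp
    have h0 : ⟪p, gradOPSGrad g j⟫ = 0 :=
      hmem _ (Submodule.orthogonalProjection (Submodule.span ℝ (g '' {k | k ≠ j})) (g j)).2
    have hsum : g j = gradOPSGrad g j + p := by
      rw [gradOPSGrad]; abel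
    rw [hsum, inner_add_right, real_inner_self_eq_norm_sq, real_inner_comm, h0, add_zero]
    positivity
  · have hin : g j ∈ Submodule.span ℝ (g '' {k | k ≠ i}) :=
      Submodule.subset_span ⟨j, hji, rfl⟩
    rw [real_inner_comm, hmem _ hin]
end

section
/- Let E be a real inner product space, n a natural number, v : Fin n → E a family of vectors, and x ∈ E. For a vector u set proj_u(x) = (⟪u, x⟫ / ‖u‖²) • u (interpreted as 0 when u = 0). Then for every permutation σ of Fin n, x - ∑_j proj_{(gramSchmidt ℝ (v ∘ σ))_j}(x) = x - ∑_j proj_{(gramSchmidt ℝ v)_j}(x); that is, the GradOPS gradient modification obtained by projecting away the Gram–Schmidt components of the other task gradients is invariant to the order in which those gradients are processed. -/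
open scoped RealInnerProductSpace

open Finset in
private lemma aux_sum_proj {E : Type*} [NormedAddCommGroup E] [InnerProductSpace ℝ E]
    {n : ℕ} (u : Fin n → E) (hu : Pairwise fun i j => ⟪u i, u j⟫ = 0) (x : E)
    (K : Submodule ℝ E) [K.HasOrthogonalProjection]
    (hK : Submodule.span ℝ (Set.range u) = K) :
    (∑ j, (⟪u j, x⟫ / ‖u j‖ ^ 2) • u j) = K.starProjection x := by
  symm
  apply Submodule.eq_starProjection_of_mem_of_inner_eq_zero
  · exact Submodule.sum_mem _ fun j _ => Submodule.smul_mem _ _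
      (hK ▸ Submodule.subset_span (Set.mem_range_self j))
  · intro w hw
    rw [← hK] at hw
    induction hw using Submodule.span_induction with
    | mem y hy =>
      obtain ⟨i, rfl⟩ := hy
      rw [inner_sub_left, sum_inner, Finset.sum_eq_single i]
      · rw [real_inner_smul_left]
        rcases eq_or_ne (u i) 0 with h | h
        · simp [h]
        · rw [real_inner_self_eq_norm_sq,
            div_mul_cancel₀ _ (pow_ne_zero 2 (norm_ne_zero_iff.2 h)), real_inner_comm, sub_self]
      · intro j _ hj
        rw [real_inner_smul_left, hu hj, mul_zero]
      · simp
    | zero => simp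
    | add y z _ _ hy hz => rw [inner_add_right, hy, hz, add_zero]
    | smul c y _ hy => rw [real_inner_smul_right, hy, mul_zero]

theorem stmt5 {E : Type*} [NormedAddCommGroup E] [InnerProductSpace ℝ E]
    {n : ℕ} (v : Fin n → E) (x : E) (σ : Equiv.Perm (Fin n)) :
    haveI : WellFoundedLT (Fin n) := inferInstance
    x - ∑ j, (⟪InnerProductSpace.gramSchmidt ℝ (v ∘ σ) j, x⟫ / ‖InnerProductSpace.gramSchmidt ℝ (v ∘ σ) j‖ ^ 2) •
        InnerProductSpace.gramSchmidt ℝ (v ∘ σ) j =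
      x - ∑ j, (⟪InnerProductSpace.gramSchmidt ℝ v j, x⟫ / ‖InnerProductSpace.gramSchmidt ℝ v j‖ ^ 2) • InnerProductSpace.gramSchmidt ℝ v j := by
  haveI : WellFoundedLT (Fin n) := inferInstance
  haveI : FiniteDimensional ℝ (Submodule.span ℝ (Set.range v)) :=
    FiniteDimensional.span_of_finite ℝ (Set.finite_range v)
  have hr : Set.range (v ∘ σ) = Set.range v := by
    rw [Set.range_comp]
    simp [Set.image_univ, Equiv.range_eq_univ]
  have h1 := aux_sum_proj (InnerProductSpace.gramSchmidt ℝ (v ∘ σ)) (InnerProductSpace.gramSchmidt_pairwise_orthogonal ℝ (v ∘ σ)) x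
    (Submodule.span ℝ (Set.range v)) (by rw [InnerProductSpace.span_gramSchmidt, hr])
  have h2 := aux_sum_proj (InnerProductSpace.gramSchmidt ℝ v) (InnerProductSpace.gramSchmidt_pairwise_orthogonal ℝ v) x
    (Submodule.span ℝ (Set.range v)) (InnerProductSpace.span_gramSchmidt ℝ v)
  rw [h1, h2]
end

section
/- Let E be a real Hilbert space, T ≥ 1 a natural number, L ≥ 0, and f : E → ℝ a differentiable function whose gradient ∇f is L-Lipschitz. Let θ ∈ E, and let g, v : Fin T → E be families of vectors such that ∇f(θ) = ∑_i g_i, ⟪g_i, v_j⟫ ≥ 0 for all indices i ≠ j, and ⟪g_i, v_i⟫ = ‖v_i‖² for every i. Then for every step size t ≥ 0, f(θ - t • ∑_i v_i) ≤ f(θ) - t (1 - (T · L · t)/2) ∑_i ‖v_i‖². -/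
open scoped RealInnerProductSpace Gradient

open InnerProductSpace in
lemma descent_aux {E : Type*} [NormedAddCommGroup E] [InnerProductSpace ℝ E] [CompleteSpace E]
    (L : ℝ) (hL : 0 ≤ L) (f : E → ℝ) (hf : Differentiable ℝ f)
    (hlip : LipschitzWith (Real.toNNReal L) (∇ f)) (x d : E) :
    f (x + d) ≤ f x + ⟪∇ f x, d⟫ + L / 2 * ‖d‖ ^ 2 := by
  set c : ℝ := ⟪∇ f x, d⟫ with hc
  set ψ : ℝ → ℝ := fun s => f x + s * c + L / 2 * ‖d‖ ^ 2 * s ^ 2 - f (x + s • d) with hψ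
  have hline : ∀ s : ℝ, HasDerivAt (fun s : ℝ => x + s • d) d s := by
    intro s
    simpa using ((hasDerivAt_id s).smul_const d).const_add x
  have hφ : ∀ s : ℝ, HasDerivAt (fun s : ℝ => f (x + s • d))
      ⟪∇ f (x + s • d), d⟫ s := by
    intro s
    have h1 : HasFDerivAt f (toDual ℝ E (∇ f (x + s • d))) (x + s • d) :=
      (hf (x + s • d)).hasGradientAt.hasFDerivAt
    have := h1.comp_hasDerivAt s (hline s)
    rw [toDual_apply_apply] at this
    exact this
  have hψd : ∀ s : ℝ, HasDerivAt ψ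
      (c + L * ‖d‖ ^ 2 * s - ⟪∇ f (x + s • d), d⟫) s := by
    intro s
    have ha : HasDerivAt (fun s : ℝ => f x + s * c + L / 2 * ‖d‖ ^ 2 * s ^ 2)
        (c + L / 2 * ‖d‖ ^ 2 * (2 * s)) s := by
      have := ((hasDerivAt_id s).mul_const c).const_add (f x)
      have h2 := (hasDerivAt_pow 2 s).const_mul (L / 2 * ‖d‖ ^ 2)
      exact (this.add h2).congr_deriv (by simp)
    have := ha.sub (hφ s)
    exact this.congr_deriv (by ring)
  have hmono : MonotoneOn ψ (Set.Icc 0 1) := by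
    apply monotoneOn_of_deriv_nonneg (convex_Icc 0 1)
    · exact Continuous.continuousOn (by
        exact continuous_iff_continuousAt.2 fun s => (hψd s).continuousAt)
    · intro s hs
      exact (hψd s).differentiableAt.differentiableWithinAt
    · intro s hs
      rw [(hψd s).deriv]
      have hs0 : 0 ≤ s := by
        rcases hs with hs
        simp [interior_Icc] at hs
        linarith [hs.1]
      have hdiff : ⟪∇ f (x + s • d) - ∇ f x, d⟫ ≤ L * s * ‖d‖ ^ 2 := by
        calc ⟪∇ f (x + s • d) - ∇ f x, d⟫ ≤ ‖∇ f (x + s • d) - ∇ f x‖ * ‖d‖ :=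
              real_inner_le_norm _ _
          _ ≤ (L * (s * ‖d‖)) * ‖d‖ := by
              apply mul_le_mul_of_nonneg_right _ (norm_nonneg d)
              have := hlip.dist_le_mul (x + s • d) x
              rw [Real.coe_toNNReal L hL] at this
              calc ‖∇ f (x + s • d) - ∇ f x‖ = dist (∇ f (x + s • d)) (∇ f x) :=
                    (dist_eq_norm _ _).symm
                _ ≤ L * dist (x + s • d) x := this
                _ = L * (s * ‖d‖) := by
                    rw [dist_eq_norm]
                    simp [norm_smul, abs_of_nonneg hs0]
          _ = L * s * ‖d‖ ^ 2 := by ring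
      have hexp : ⟪∇ f (x + s • d), d⟫ = c + ⟪∇ f (x + s • d) - ∇ f x, d⟫ := by
        rw [inner_sub_left, hc]; ring
      rw [hexp]
      nlinarith [hdiff]
  have h01 : ψ 0 ≤ ψ 1 := hmono (Set.left_mem_Icc.2 zero_le_one)
    (Set.right_mem_Icc.2 zero_le_one) zero_le_one
  simp only [hψ] at h01
  norm_num at h01
  linarith [h01]

theorem stmt9 {E : Type*} [NormedAddCommGroup E] [InnerProductSpace ℝ E] [CompleteSpace E]
    {T : ℕ} (hT : 1 ≤ T) (L : ℝ) (hL : 0 ≤ L)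
    (f : E → ℝ) (hf : Differentiable ℝ f)
    (hlip : LipschitzWith (Real.toNNReal L) (∇ f))
    (θ : E) (g v : Fin T → E)
    (hgrad : ∇ f θ = ∑ i, g i)
    (h1 : ∀ i j : Fin T, i ≠ j → 0 ≤ ⟪g i, v j⟫)
    (h2 : ∀ i : Fin T, ⟪g i, v i⟫ = ‖v i‖ ^ 2)
    (t : ℝ) (ht : 0 ≤ t) :
    f (θ - t • ∑ i, v i) ≤ f θ - t * (1 - (T * L * t) / 2) * ∑ i, ‖v i‖ ^ 2 := by
  set V : E := ∑ i, v i with hV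
  set S : ℝ := ∑ i, ‖v i‖ ^ 2 with hS
  have hSnn : 0 ≤ S := Finset.sum_nonneg fun i _ => sq_nonneg _
  have hdesc := descent_aux L hL f hf hlip θ (-(t • V))
  rw [← sub_eq_add_neg] at hdesc
  -- inner product bound
  have hinner : t * S ≤ ⟪∇ f θ, t • V⟫ := by
    rw [real_inner_smul_right, hgrad, hV]
    have hsum : ⟪(∑ i, g i : E), ∑ j, v j⟫ = ∑ i, ∑ j, ⟪g i, v j⟫ := by
      rw [sum_inner]; simp_rw [inner_sum]
    rw [hsum]
    have hSle : S ≤ ∑ i, ∑ j, ⟪g i, v j⟫ := by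
      rw [hS]
      have step : ∀ i : Fin T, ‖v i‖ ^ 2 ≤ ∑ j, ⟪g i, v j⟫ := by
        intro i
        rw [← h2 i]
        refine Finset.single_le_sum (f := fun j => ⟪g i, v j⟫) ?_ (Finset.mem_univ i)
        intro j _
        show (0:ℝ) ≤ ⟪g i, v j⟫
        by_cases hij : i = j
        · subst hij; rw [h2]; positivity
        · exact h1 i j hij
      exact Finset.sum_le_sum fun i _ => step i
    exact mul_le_mul_of_nonneg_left hSle ht

  -- norm bound
  have hnorm : ‖V‖ ^ 2 ≤ T * S := by
    calc ‖V‖ ^ 2 ≤ (∑ i, ‖v i‖) ^ 2 := by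
          apply pow_le_pow_left₀ (norm_nonneg _)
          exact norm_sum_le _ _
      _ ≤ T * S := by
          have := sq_sum_le_card_mul_sum_sq (s := Finset.univ) (f := fun i => ‖v i‖)
          simpa [hS] using this
  have hnorm2 : ‖-(t • V)‖ ^ 2 = t ^ 2 * ‖V‖ ^ 2 := by
    rw [norm_neg, norm_smul]
    simp [abs_of_nonneg ht, mul_pow]
  have hinner2 : ⟪∇ f θ, -(t • V)⟫ = -⟪∇ f θ, t • V⟫ := inner_neg_right _ _
  calc f (θ - t • V) ≤ f θ + ⟪∇ f θ, -(t • V)⟫ + L / 2 * ‖-(t • V)‖ ^ 2 := hdesc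
    _ ≤ f θ - t * S + L / 2 * (t ^ 2 * (T * S)) := by
        rw [hinner2, hnorm2]
        have h3 : L / 2 * (t ^ 2 * ‖V‖ ^ 2) ≤ L / 2 * (t ^ 2 * (T * S)) := by
          apply mul_le_mul_of_nonneg_left _ (by linarith)
          exact mul_le_mul_of_nonneg_left hnorm (sq_nonneg t)
        linarith [hinner]
    _ = f θ - t * (1 - (T * L * t) / 2) * S := by ring
end

section
/- Let E be a real Hilbert space, T ≥ 1 a natural number, L ≥ 0, and f : E → ℝ a differentiable function whose gradient ∇f is L-Lipschitz. Let θ ∈ E, let g, v : Fin T → E be families of vectors such that ∇f(θ) = ∑_i g_i, ⟪g_i, v_j⟫ ≥ 0 for all indices i ≠ j, and ⟪g_i, v_i⟫ = ‖v_i‖² for every i, and let w : Fin T → ℝ be nonnegative weights (w_i ≥ 0 for all i). Then for every step size t ≥ 0, f(θ - t • ∑_i w_i • v_i) ≤ f(θ) - t ( ∑_i w_i ‖v_i‖² - (T · L · t)/2 · ∑_i w_i² ‖v_i‖² ). -/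
open scoped RealInnerProductSpace Gradient

private lemma descent_lemma {E : Type*} [NormedAddCommGroup E] [InnerProductSpace ℝ E]
    [CompleteSpace E] {L : ℝ} (hL : 0 ≤ L) {f : E → ℝ} (hf : Differentiable ℝ f)
    (hlip : LipschitzWith (Real.toNNReal L) (∇ f)) (x u : E) :
    f (x + u) ≤ f x + ⟪∇ f x, u⟫ + L / 2 * ‖u‖ ^ 2 := by
  set c : ℝ := ⟪∇ f x, u⟫ with hc
  have hd : ∀ s : ℝ, HasDerivAt (fun s : ℝ => f (x + s • u)) ⟪∇ f (x + s • u), u⟫ s := by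
    intro s
    have h1 : HasFDerivAt f (InnerProductSpace.toDual ℝ E (∇ f (x + s • u))) (x + s • u) :=
      hasGradientAt_iff_hasFDerivAt.mp (hf _).hasGradientAt
    have h2 : HasDerivAt (fun s : ℝ => x + s • u) u s := by
      simpa using ((hasDerivAt_id s).smul_const u).const_add x
    exact (h1.comp_hasDerivAt s h2).congr_deriv (by simp)
  set ψ : ℝ → ℝ := fun s => f (x + s • u) - s * c - L * ‖u‖ ^ 2 / 2 * s ^ 2 with hψdef
  have hψ : ∀ s : ℝ, HasDerivAt ψ (⟪∇ f (x + s • u), u⟫ - c - L * ‖u‖ ^ 2 * s) s := by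
    intro s
    have := ((hd s).sub (hasDerivAt_mul_const c)).sub
      ((hasDerivAt_pow 2 s).const_mul (L * ‖u‖ ^ 2 / 2))
    refine this.congr_deriv ?_
    rw [show (2:ℕ) - 1 = 1 from rfl]; push_cast; ring
  have hder : ∀ s ∈ Set.Ioo (0:ℝ) 1, deriv ψ s ≤ 0 := by
    intro s hs
    rw [(hψ s).deriv]
    have hnn : ⟪∇ f (x + s • u) - ∇ f x, u⟫ ≤ ‖∇ f (x + s • u) - ∇ f x‖ * ‖u‖ :=
      real_inner_le_norm _ _
    have hlipb : ‖∇ f (x + s • u) - ∇ f x‖ ≤ L * (s * ‖u‖) := by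
      have := hlip.dist_le_mul (x + s • u) x
      rw [dist_eq_norm, dist_eq_norm] at this
      simp only [add_sub_cancel_left] at this
      calc ‖∇ f (x + s • u) - ∇ f x‖ ≤ (Real.toNNReal L : ℝ) * ‖s • u‖ := this
        _ = L * (s * ‖u‖) := by
            rw [Real.coe_toNNReal L hL, norm_smul, Real.norm_eq_abs,
              abs_of_nonneg hs.1.le]
    have hsub : ⟪∇ f (x + s • u) - ∇ f x, u⟫ = ⟪∇ f (x + s • u), u⟫ - c := by
      rw [inner_sub_left]
    nlinarith [norm_nonneg u, hs.1.le]
  have hcont : ContinuousOn ψ (Set.Icc (0:ℝ) 1) :=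
    (Differentiable.continuous (fun s => (hψ s).differentiableAt)).continuousOn
  have hdiff : DifferentiableOn ℝ ψ (interior (Set.Icc (0:ℝ) 1)) :=
    fun s _ => (hψ s).differentiableAt.differentiableWithinAt
  have hanti : AntitoneOn ψ (Set.Icc (0:ℝ) 1) := by
    apply antitoneOn_of_deriv_nonpos (convex_Icc 0 1) hcont hdiff
    intro s hs
    rw [interior_Icc] at hs
    exact hder s hs
  have h01 : ψ 1 ≤ ψ 0 :=
    hanti (Set.mem_Icc.mpr ⟨le_refl 0, zero_le_one⟩) (Set.mem_Icc.mpr ⟨zero_le_one, le_refl 1⟩)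
      zero_le_one
  simp only [hψdef, one_smul, zero_smul, add_zero, one_pow, mul_one, zero_mul, mul_zero,
    sub_zero, zero_pow] at h01
  linarith [h01]

theorem stmt11 {E : Type*} [NormedAddCommGroup E] [InnerProductSpace ℝ E] [CompleteSpace E]
    {T : ℕ} (hT : 1 ≤ T) (L : ℝ) (hL : 0 ≤ L)
    (f : E → ℝ) (hf : Differentiable ℝ f)
    (hlip : LipschitzWith (Real.toNNReal L) (∇ f))
    (θ : E) (g v : Fin T → E)
    (hgrad : ∇ f θ = ∑ i, g i)
    (h1 : ∀ i j : Fin T, i ≠ j → 0 ≤ ⟪g i, v j⟫)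
    (h2 : ∀ i : Fin T, ⟪g i, v i⟫ = ‖v i‖ ^ 2)
    (w : Fin T → ℝ) (hw : ∀ i, 0 ≤ w i)
    (t : ℝ) (ht : 0 ≤ t) :
    f (θ - t • ∑ i, w i • v i) ≤
      f θ - t * ((∑ i, w i * ‖v i‖ ^ 2) - (T * L * t) / 2 * ∑ i, w i ^ 2 * ‖v i‖ ^ 2) := by
  set d : E := ∑ i, w i • v i with hd
  have key := descent_lemma hL hf hlip θ ((-t) • d)
  have heq : θ + (-t) • d = θ - t • d := by
    rw [neg_smul, ← sub_eq_add_neg]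
  rw [heq] at key
  -- inner product lower bound
  have hA : (∑ i, w i * ‖v i‖ ^ 2) ≤ ⟪∇ f θ, d⟫ := by
    rw [hd, inner_sum]
    apply Finset.sum_le_sum
    intro j _
    rw [real_inner_smul_right, hgrad, sum_inner]
    apply mul_le_mul_of_nonneg_left _ (hw j)
    have : ‖v j‖ ^ 2 = ⟪g j, v j⟫ := (h2 j).symm
    rw [this]
    apply Finset.single_le_sum (f := fun i => (⟪g i, v j⟫ : ℝ)) (fun i _ => ?_) (Finset.mem_univ j)
    rcases eq_or_ne i j with rfl | hij
    · rw [h2]; positivity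
    · exact h1 i j hij
  -- norm upper bound
  have hB : ‖d‖ ^ 2 ≤ (T : ℝ) * ∑ i, w i ^ 2 * ‖v i‖ ^ 2 := by
    have h1' : ‖d‖ ≤ ∑ i, w i * ‖v i‖ := by
      rw [hd]
      calc ‖∑ i, w i • v i‖ ≤ ∑ i, ‖w i • v i‖ := norm_sum_le _ _
        _ = ∑ i, w i * ‖v i‖ := by
            apply Finset.sum_congr rfl
            intro i _
            rw [norm_smul, Real.norm_eq_abs, abs_of_nonneg (hw i)]
    have h2' : (∑ i, w i * ‖v i‖) ^ 2 ≤ (T : ℝ) * ∑ i, (w i * ‖v i‖) ^ 2 := by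
      have := sq_sum_le_card_mul_sum_sq (s := Finset.univ) (f := fun i => w i * ‖v i‖)
      simpa using this
    have h3' : ‖d‖ ^ 2 ≤ (∑ i, w i * ‖v i‖) ^ 2 := by
      apply sq_le_sq' _ h1'
      have : (0:ℝ) ≤ ∑ i, w i * ‖v i‖ := Finset.sum_nonneg fun i _ => mul_nonneg (hw i) (norm_nonneg _)
      linarith [norm_nonneg d]
    calc ‖d‖ ^ 2 ≤ (∑ i, w i * ‖v i‖) ^ 2 := h3'
      _ ≤ (T : ℝ) * ∑ i, (w i * ‖v i‖) ^ 2 := h2'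
      _ = (T : ℝ) * ∑ i, w i ^ 2 * ‖v i‖ ^ 2 := by
          congr 1; apply Finset.sum_congr rfl; intro i _; ring
  have hinner : ⟪∇ f θ, (-t) • d⟫ = -t * ⟪∇ f θ, d⟫ := real_inner_smul_right _ _ _
  have hnorm : ‖(-t) • d‖ ^ 2 = t ^ 2 * ‖d‖ ^ 2 := by
    rw [norm_smul, Real.norm_eq_abs, abs_neg, abs_of_nonneg ht, mul_pow]
  rw [hinner, hnorm] at key
  have hmul1 : t * (∑ i, w i * ‖v i‖ ^ 2) ≤ t * ⟪∇ f θ, d⟫ :=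
    mul_le_mul_of_nonneg_left hA ht
  have hmul2 : L / 2 * (t ^ 2 * ‖d‖ ^ 2) ≤ L / 2 * (t ^ 2 * ((T : ℝ) * ∑ i, w i ^ 2 * ‖v i‖ ^ 2)) := by
    apply mul_le_mul_of_nonneg_left _ (by positivity)
    exact mul_le_mul_of_nonneg_left hB (by positivity)
  nlinarith [key]
end
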